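/- For any submodular function f on subsets of a finite ground set and any three subsets W_a, W_b, W_j: f(W_a ∪ W_b ∪ W_j) + f( (W_a ∩ W_b) ∪ (W_a ∩ W_j) ∪ (W_b ∩ W_j) ) ≤ f(W_j) − f(W_j ∩ W_a ∩ W_b) + f(W_a) + f(W_b). -/

import Mathlib

/-! Add the submodular inequalities for the pairs `(a, b)`, `(a ⊔ b, c)` and `(a ⊓ b, (a ⊔ b) ⊓ c)`.
In a distributive lattice the last pair has join the median `a ⊓ b ⊔ a ⊓ c ⊔ b ⊓ c` and meet
`a ⊓ b ⊓ c`, and the terms `f (a ⊔ b)`, `f (a ⊓ b)`, `f ((a ⊔ b) ⊓ c)` cancel in the sum. -/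

theorem inf_sup_sup_inf_eq_median {α : Type*} [DistribLattice α] (a b c : α) :
    a ⊓ b ⊔ (a ⊔ b) ⊓ c = a ⊓ b ⊔ a ⊓ c ⊔ b ⊓ c := by
  rw [inf_sup_right, sup_assoc]

theorem inf_inf_sup_inf_eq_inf_inf {α : Type*} [DistribLattice α] (a b c : α) :
    a ⊓ b ⊓ ((a ⊔ b) ⊓ c) = c ⊓ a ⊓ b := by
  rw [← inf_assoc, inf_of_le_left (inf_le_sup : a ⊓ b ≤ a ⊔ b), inf_comm, inf_assoc]

theorem submodular_sup_add_median_le {α : Type*} [DistribLattice α] (f : α → ℝ)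
    (hsub : ∀ a b, f (a ⊔ b) + f (a ⊓ b) ≤ f a + f b) (a b c : α) :
    f (a ⊔ b ⊔ c) + f (a ⊓ b ⊔ a ⊓ c ⊔ b ⊓ c) ≤ f c - f (c ⊓ a ⊓ b) + f a + f b := by
  have hab := hsub a b
  have habc := hsub (a ⊔ b) c
  have hmedian := hsub (a ⊓ b) ((a ⊔ b) ⊓ c)
  rw [inf_sup_sup_inf_eq_median, inf_inf_sup_inf_eq_inf_inf] at hmedian
  linarith

theorem extremal_inequality_two_general {γ : Type*} [DecidableEq γ]
    (f : Finset γ → ℝ)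
    (hsub : ∀ A B : Finset γ, f (A ∪ B) + f (A ∩ B) ≤ f A + f B)
    (Wa Wb Wj : Finset γ) :
    f (Wa ∪ Wb ∪ Wj) + f ((Wa ∩ Wb) ∪ (Wa ∩ Wj) ∪ (Wb ∩ Wj)) ≤
      f Wj - f (Wj ∩ Wa ∩ Wb) + f Wa + f Wb :=
  submodular_sup_add_median_le f hsub Wa Wb Wj

/-- For any submodular, monotone nondecreasing `f` on subsets of a finite
ground set and any `Wa, Wb, Wj`:
`f(Wa ∪ Wb ∪ Wj) + f((Wa∩Wb) ∪ (Wa∩Wj) ∪ (Wb∩Wj)) ≤ f(Wj) − f(Wj∩Wa∩Wb) + f(Wa) + f(Wb)`. -/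
theorem extremal_inequality_two {γ : Type*} [DecidableEq γ] [Fintype γ]
    (f : Finset γ → ℝ)
    (hsub : ∀ A B : Finset γ, f (A ∪ B) + f (A ∩ B) ≤ f A + f B)
    (hmono : ∀ A B : Finset γ, A ⊆ B → f A ≤ f B)
    (Wa Wb Wj : Finset γ) :
    f (Wa ∪ Wb ∪ Wj) + f ((Wa ∩ Wb) ∪ (Wa ∩ Wj) ∪ (Wb ∩ Wj)) ≤
      f Wj - f (Wj ∩ Wa ∩ Wb) + f Wa + f Wb :=
  extremal_inequality_two_general f hsub Wa Wb Wj
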